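/- For fixed a ∈ (0, 1/2], the function f₉(r) = r²·𝒦ₐ'(r)·𝒦ₐ(r) − 3(1-a)·𝒦ₐ'(r)·(ℰₐ(r) − (1-r²)·𝒦ₐ(r)) is strictly increasing on (0,1), where 𝒦ₐ'(r) = 𝒦ₐ(√(1-r²)). -/
import Mathlib


open Real Filter Set Topology

/-- Pochhammer symbol (rising factorial) for real `x`. -/
noncomputable def poch (x : ℝ) (n : ℕ) : ℝ := (ascPochhammer ℝ n).eval x

/-- Generalized complete elliptic integral of the first kind. -/
noncomputable def Ka (a r : ℝ) : ℝ :=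
  (π / 2) * ∑' n : ℕ, (poch a n * poch (1 - a) n / (n.factorial : ℝ) ^ 2) * r ^ (2 * n)

/-- Generalized complete elliptic integral of the second kind. -/
noncomputable def Ea (a r : ℝ) : ℝ :=
  (π / 2) * ∑' n : ℕ, (poch (a - 1) n * poch (1 - a) n / (n.factorial : ℝ) ^ 2) * r ^ (2 * n)

/-- Generalized Grötzsch ring function. -/
noncomputable def muG (a r : ℝ) : ℝ :=
  π / (2 * Real.sin (π * a)) * (Ka a (Real.sqrt (1 - r ^ 2)) / Ka a r)

/-- Generalized Hersch–Pfluger distortion function. -/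
noncomputable def phiHP (a K r : ℝ) : ℝ := Function.invFun (muG a) (muG a r / K)

/-- The function mₐ(r). -/
noncomputable def mA (a r : ℝ) : ℝ :=
  2 / (π * Real.sin (π * a)) * (1 - r ^ 2) * Ka a (Real.sqrt (1 - r ^ 2)) * Ka a r

/-- Digamma function (as the logarithmic derivative of Γ). -/
noncomputable def psiDG (x : ℝ) : ℝ := deriv (fun t => Real.log (Real.Gamma t)) x

/-- Ramanujan constant R(a). -/
noncomputable def RamanujanR (a : ℝ) : ℝ :=
  -2 * Real.eulerMascheroniConstant - psiDG a - psiDG (1 - a)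


private lemma poch_zero (x : ℝ) : poch x 0 = 1 := by simp [poch]

private lemma poch_succ (x : ℝ) (n : ℕ) : poch x (n + 1) = poch x n * (x + n) :=
  ascPochhammer_succ_eval n x

private lemma poch_succ_left (x : ℝ) (n : ℕ) : poch x (n + 1) = x * poch (x + 1) n := by
  simp [poch, ascPochhammer_succ_left, Polynomial.eval_comp]

private lemma poch_pos {x : ℝ} (hx : 0 < x) (n : ℕ) : 0 < poch x n := by
  induction n with
  | zero => simp [poch_zero]
  | succ n ih => rw [poch_succ]; exact mul_pos ih (by positivity)

private noncomputable def cc (a : ℝ) (n : ℕ) : ℝ :=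
  poch a n * poch (1 - a) n / (n.factorial : ℝ) ^ 2

private noncomputable def dd (a : ℝ) (n : ℕ) : ℝ :=
  poch (a - 1) n * poch (1 - a) n / (n.factorial : ℝ) ^ 2

private noncomputable def qq (a : ℝ) (n : ℕ) : ℝ :=
  cc a n * (1 - 3 * a * (1 - a) / (n + 1))

private lemma cc_zero (a : ℝ) : cc a 0 = 1 := by simp [cc, poch_zero]

private lemma fact_ne (n : ℕ) : ((n.factorial : ℝ)) ≠ 0 := by
  positivity

private lemma cc_succ (a : ℝ) (n : ℕ) :
    cc a (n + 1) = cc a n * ((a + n) * ((1 - a) + n)) / ((n : ℝ) + 1) ^ 2 := by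
  have h := fact_ne n
  rw [cc, cc, poch_succ, poch_succ, Nat.factorial_succ]
  push_cast
  field_simp

private lemma dd_succ (a : ℝ) (n : ℕ) :
    dd a (n + 1) = cc a n * ((a - 1) * ((1 - a) + n)) / ((n : ℝ) + 1) ^ 2 := by
  have h := fact_ne n
  have h1 : poch (a - 1) (n + 1) = (a - 1) * poch a n := by
    rw [poch_succ_left]; ring_nf
  rw [dd, cc, h1, poch_succ, Nat.factorial_succ]
  push_cast
  field_simp

private lemma cc_pos {a : ℝ} (h0 : 0 < a) (h1 : a < 1) (n : ℕ) : 0 < cc a n := by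
  have := poch_pos h0 n
  have := poch_pos (show (0:ℝ) < 1 - a by linarith) n
  have := fact_ne n
  rw [cc]; positivity

private lemma cc_succ_le {a : ℝ} (h0 : 0 < a) (h1 : a ≤ 1/2) (n : ℕ) :
    cc a (n + 1) ≤ cc a n := by
  have hpos := cc_pos h0 (by linarith) n
  have hn : (0:ℝ) ≤ (n : ℝ) := Nat.cast_nonneg n
  rw [cc_succ]
  rw [div_le_iff₀ (by positivity)]
  nlinarith [sq_nonneg (a - 1/2), mul_pos hpos hpos]

private lemma cc_le_one {a : ℝ} (h0 : 0 < a) (h1 : a ≤ 1/2) (n : ℕ) : cc a n ≤ 1 := by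
  induction n with
  | zero => rw [cc_zero]
  | succ n ih => exact (cc_succ_le h0 h1 n).trans ih

private lemma dd_abs_le_one {a : ℝ} (h0 : 0 < a) (h1 : a ≤ 1/2) (n : ℕ) : |dd a n| ≤ 1 := by
  cases n with
  | zero => simp [dd, poch_zero]
  | succ n =>
    have hn : (0:ℝ) ≤ (n : ℝ) := Nat.cast_nonneg n
    have hcp := cc_pos h0 (by linarith) n
    have hc1 := cc_le_one h0 h1 n
    rw [dd_succ, abs_div, abs_mul, abs_of_pos hcp]
    have h2 : |(a - 1) * ((1 - a) + n)| = (1 - a) * ((1 - a) + n) := by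
      rw [abs_mul, abs_of_nonpos (by linarith), abs_of_nonneg (by linarith)]; ring
    rw [h2, abs_of_pos (show (0:ℝ) < ((n:ℝ)+1)^2 by positivity)]
    rw [div_le_one (by positivity)]
    have hb : (1 - a) * ((1 - a) + (n:ℝ)) ≤ ((n:ℝ) + 1) ^ 2 := by nlinarith
    calc cc a n * ((1 - a) * ((1 - a) + (n:ℝ))) ≤ 1 * (((n:ℝ) + 1) ^ 2) :=
          mul_le_mul hc1 hb (by nlinarith) one_pos.le
      _ = ((n:ℝ) + 1) ^ 2 := one_mul _

private lemma a1a_le {a : ℝ} (h0 : 0 < a) (h1 : a ≤ 1/2) : a * (1 - a) ≤ 1/4 := by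
  nlinarith [sq_nonneg (a - 1/2)]

private lemma qq_factor_bounds {a : ℝ} (h0 : 0 < a) (h1 : a ≤ 1/2) (n : ℕ) :
    1/4 ≤ 1 - 3 * a * (1 - a) / ((n : ℝ) + 1) ∧ 1 - 3 * a * (1 - a) / ((n : ℝ) + 1) ≤ 1 := by
  have hn : (0:ℝ) ≤ (n : ℝ) := Nat.cast_nonneg n
  have h4 := a1a_le h0 h1
  have hpos : (0:ℝ) < (n:ℝ) + 1 := by linarith
  constructor
  · have : 3 * a * (1 - a) / ((n : ℝ) + 1) ≤ 3/4 := by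
      rw [div_le_iff₀ hpos]; nlinarith
    linarith
  · have : 0 ≤ 3 * a * (1 - a) / ((n : ℝ) + 1) := by
      apply div_nonneg (by nlinarith) (by linarith)
    linarith

private lemma qq_pos {a : ℝ} (h0 : 0 < a) (h1 : a ≤ 1/2) (n : ℕ) : 0 < qq a n := by
  have := (qq_factor_bounds h0 h1 n).1
  have := cc_pos h0 (by linarith) n
  rw [qq]; nlinarith

private lemma qq_le_one {a : ℝ} (h0 : 0 < a) (h1 : a ≤ 1/2) (n : ℕ) : qq a n ≤ 1 := by
  obtain ⟨hl, hu⟩ := qq_factor_bounds h0 h1 n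
  have hcp := cc_pos h0 (by linarith) n
  have hc1 := cc_le_one h0 h1 n
  rw [qq]; nlinarith

/-- Summability of weighted even power series with bounded weights. -/
private lemma summable_w {w : ℕ → ℝ} {C : ℝ} (hw : ∀ n, |w n| ≤ C) {r : ℝ}
    (hr0 : 0 ≤ r) (hr1 : r < 1) : Summable fun n => w n * r ^ (2 * n) := by
  have hr2 : r ^ 2 < 1 := by nlinarith
  have hg : Summable fun n : ℕ => C * (r ^ 2) ^ n :=
    (summable_geometric_of_lt_one (by positivity) hr2).mul_left C
  refine Summable.of_norm (Summable.of_nonneg_of_le (fun n => norm_nonneg _) (fun n => ?_) hg)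
  have hC : 0 ≤ C := (abs_nonneg _).trans (hw 0)
  rw [Real.norm_eq_abs, abs_mul, pow_mul, abs_pow, abs_of_nonneg (sq_nonneg r)]
  exact mul_le_mul (hw n) le_rfl (by positivity) hC

/-- The key coefficient identity. -/
private lemma coeff_id {a : ℝ} (n : ℕ) :
    qq a n = cc a n - 3 * (1 - a) * ((dd a (n + 1) - cc a (n + 1)) + cc a n) := by
  have hpos : ((n:ℝ) + 1) ≠ 0 := by positivity
  rw [qq, dd_succ, cc_succ]
  field_simp
  ring

private lemma Ka_eq (a r : ℝ) : Ka a r = (π / 2) * ∑' n : ℕ, cc a n * r ^ (2 * n) := rfl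

private lemma Ea_eq (a r : ℝ) : Ea a r = (π / 2) * ∑' n : ℕ, dd a n * r ^ (2 * n) := rfl

private lemma cc_abs {a : ℝ} (h0 : 0 < a) (h1 : a ≤ 1/2) (n : ℕ) : |cc a n| ≤ 1 := by
  rw [abs_of_pos (cc_pos h0 (by linarith) n)]; exact cc_le_one h0 h1 n

private lemma qq_abs {a : ℝ} (h0 : 0 < a) (h1 : a ≤ 1/2) (n : ℕ) : |qq a n| ≤ 1 := by
  rw [abs_of_pos (qq_pos h0 h1 n)]; exact qq_le_one h0 h1 n

private lemma sumA {a : ℝ} (h0 : 0 < a) (h1 : a ≤ 1/2) {r : ℝ} (hr0 : 0 ≤ r) (hr1 : r < 1) :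
    Summable fun n => cc a n * r ^ (2 * n) := summable_w (cc_abs h0 h1) hr0 hr1

private lemma sumD {a : ℝ} (h0 : 0 < a) (h1 : a ≤ 1/2) {r : ℝ} (hr0 : 0 ≤ r) (hr1 : r < 1) :
    Summable fun n => dd a n * r ^ (2 * n) := summable_w (dd_abs_le_one h0 h1) hr0 hr1

private lemma sumQ {a : ℝ} (h0 : 0 < a) (h1 : a ≤ 1/2) {r : ℝ} (hr0 : 0 ≤ r) (hr1 : r < 1) :
    Summable fun n => qq a n * r ^ (2 * n) := summable_w (qq_abs h0 h1) hr0 hr1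

private lemma sumT {a : ℝ} (h0 : 0 < a) (h1 : a ≤ 1/2) {r : ℝ} (hr0 : 0 ≤ r) (hr1 : r < 1) :
    Summable fun n => (dd a (n + 1) - cc a (n + 1)) * r ^ (2 * n) := by
  refine summable_w (C := 2) (fun n => ?_) hr0 hr1
  calc |dd a (n+1) - cc a (n+1)| ≤ |dd a (n+1)| + |cc a (n+1)| := abs_sub _ _
    _ ≤ 2 := by linarith [dd_abs_le_one h0 h1 (n+1), cc_abs h0 h1 (n+1)]

/-- Identity: D - A = r² T. -/
private lemma hDA {a : ℝ} (h0 : 0 < a) (h1 : a ≤ 1/2) {r : ℝ} (hr0 : 0 ≤ r) (hr1 : r < 1) :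
    (∑' n : ℕ, dd a n * r ^ (2 * n)) - (∑' n : ℕ, cc a n * r ^ (2 * n))
      = r ^ 2 * ∑' n : ℕ, (dd a (n + 1) - cc a (n + 1)) * r ^ (2 * n) := by
  have hsub : Summable fun n : ℕ => (dd a n - cc a n) * r ^ (2 * n) := by
    have := (sumD h0 h1 hr0 hr1).sub (sumA h0 h1 hr0 hr1)
    simpa [sub_mul] using this
  have step1 : (∑' n : ℕ, dd a n * r ^ (2 * n)) - (∑' n : ℕ, cc a n * r ^ (2 * n))
      = ∑' n : ℕ, (dd a n - cc a n) * r ^ (2 * n) := by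
    rw [← Summable.tsum_sub (sumD h0 h1 hr0 hr1) (sumA h0 h1 hr0 hr1)]
    congr 1; funext n; ring
  rw [step1, Summable.tsum_eq_zero_add hsub]
  have h00 : (dd a 0 - cc a 0) * r ^ (2 * 0) = 0 := by
    simp [dd, cc_zero, poch_zero]
  rw [h00, zero_add]
  have : (fun n : ℕ => (dd a (n + 1) - cc a (n + 1)) * r ^ (2 * (n + 1)))
      = fun n : ℕ => r ^ 2 * ((dd a (n + 1) - cc a (n + 1)) * r ^ (2 * n)) := by
    funext n; rw [show 2 * (n + 1) = 2 * n + 2 by ring, pow_add]; ring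
  rw [this, tsum_mul_left]

/-- Identity I. -/
private lemma identity1 {a : ℝ} (h0 : 0 < a) (h1 : a ≤ 1/2) {r : ℝ} (hr0 : 0 ≤ r) (hr1 : r < 1) :
    r ^ 2 * Ka a r - 3 * (1 - a) * (Ea a r - (1 - r ^ 2) * Ka a r)
      = r ^ 2 * ((π / 2) * ∑' n : ℕ, qq a n * r ^ (2 * n)) := by
  have hA := sumA h0 h1 hr0 hr1
  have hT := sumT h0 h1 hr0 hr1
  have hS : (∑' n : ℕ, qq a n * r ^ (2 * n))
      = (∑' n : ℕ, cc a n * r ^ (2 * n))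
        - 3 * (1 - a) * ((∑' n : ℕ, (dd a (n + 1) - cc a (n + 1)) * r ^ (2 * n))
            + (∑' n : ℕ, cc a n * r ^ (2 * n))) := by
    have hadd : Summable fun n : ℕ =>
        ((dd a (n + 1) - cc a (n + 1)) + cc a n) * r ^ (2 * n) := by
      have := hT.add hA
      simpa [add_mul] using this
    have e1 : (fun n : ℕ => qq a n * r ^ (2 * n))
        = fun n : ℕ => cc a n * r ^ (2 * n)
            - 3 * (1 - a) * (((dd a (n + 1) - cc a (n + 1)) + cc a n) * r ^ (2 * n)) := by
      funext n; rw [coeff_id (a := a) n]; ring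
    rw [e1, Summable.tsum_sub hA (hadd.mul_left _), tsum_mul_left]
    congr 2
    rw [← Summable.tsum_add hT hA]
    congr 1; funext n; ring
  rw [Ka_eq, Ea_eq]
  have := hDA h0 h1 hr0 hr1
  rw [hS]
  linear_combination (-3 * (1 - a) * (π / 2)) * this

private lemma ccd_abs {a : ℝ} (h0 : 0 < a) (h1 : a ≤ 1/2) (n : ℕ) :
    |cc a n - cc a (n + 1)| ≤ 1 := by
  have h2 := cc_succ_le h0 h1 n
  have h3 := cc_pos h0 (by linarith) (n + 1)
  have h4 := cc_le_one h0 h1 n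
  rw [abs_of_nonneg (by linarith)]; linarith

/-- Identity II : (1 - s²)·Ka a s = (π/2)·(1 - U s). -/
private lemma identity2 {a : ℝ} (h0 : 0 < a) (h1 : a ≤ 1/2) {s : ℝ} (hs0 : 0 ≤ s) (hs1 : s < 1) :
    (1 - s ^ 2) * Ka a s
      = (π / 2) * (1 - ∑' n : ℕ, (cc a n - cc a (n + 1)) * s ^ (2 * (n + 1))) := by
  have hA := sumA h0 h1 hs0 hs1
  have hexp : ∀ n : ℕ, s ^ (2 * (n + 1)) = s ^ (2 * n) * s ^ 2 := by
    intro n; rw [show 2 * (n + 1) = 2 * n + 2 by ring, pow_add]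
  have hf1 : Summable fun n : ℕ => cc a (n + 1) * s ^ (2 * (n + 1)) := by
    have hw : ∀ n : ℕ, |cc a (n + 1) * s ^ 2| ≤ 1 := by
      intro n
      rw [abs_mul]
      have := cc_abs h0 h1 (n + 1)
      have h2 : |s ^ 2| ≤ 1 := by rw [abs_of_nonneg (sq_nonneg s)]; nlinarith
      calc |cc a (n+1)| * |s ^ 2| ≤ 1 * 1 := mul_le_mul this h2 (abs_nonneg _) zero_le_one
        _ = 1 := by ring
    have := summable_w hw hs0 hs1
    refine this.congr fun n => ?_
    rw [hexp n]; ring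
  have hf2 : Summable fun n : ℕ => cc a n * s ^ (2 * (n + 1)) := by
    have hw : ∀ n : ℕ, |cc a n * s ^ 2| ≤ 1 := by
      intro n
      rw [abs_mul]
      have := cc_abs h0 h1 n
      have h2 : |s ^ 2| ≤ 1 := by rw [abs_of_nonneg (sq_nonneg s)]; nlinarith
      calc |cc a n| * |s ^ 2| ≤ 1 * 1 := mul_le_mul this h2 (abs_nonneg _) zero_le_one
        _ = 1 := by ring
    have := summable_w hw hs0 hs1
    refine this.congr fun n => ?_
    rw [hexp n]; ring
  have e1 : (∑' n : ℕ, cc a n * s ^ (2 * n))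
      = 1 + ∑' n : ℕ, cc a (n + 1) * s ^ (2 * (n + 1)) := by
    rw [Summable.tsum_eq_zero_add hA]
    congr 1
    simp [cc_zero]
  have e2 : s ^ 2 * (∑' n : ℕ, cc a n * s ^ (2 * n))
      = ∑' n : ℕ, cc a n * s ^ (2 * (n + 1)) := by
    rw [← tsum_mul_left]
    congr 1; funext n; rw [hexp n]; ring
  have e3 : (∑' n : ℕ, (cc a n - cc a (n + 1)) * s ^ (2 * (n + 1)))
      = (∑' n : ℕ, cc a n * s ^ (2 * (n + 1))) - ∑' n : ℕ, cc a (n + 1) * s ^ (2 * (n + 1)) := by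
    rw [← Summable.tsum_sub hf2 hf1]
    congr 1; funext n; ring
  rw [Ka_eq, e3]
  have lhs_eq : (1 - s ^ 2) * (π / 2 * ∑' n : ℕ, cc a n * s ^ (2 * n))
      = (π / 2) * ((∑' n : ℕ, cc a n * s ^ (2 * n)) - s ^ 2 * ∑' n : ℕ, cc a n * s ^ (2 * n)) := by
    ring
  rw [lhs_eq, e2, e1]
  ring

private lemma cc_one (a : ℝ) : cc a 1 = a * (1 - a) := by
  have := cc_succ a 0
  simpa [cc_zero] using this

private lemma sumU {a : ℝ} (h0 : 0 < a) (h1 : a ≤ 1/2) {s : ℝ} (hs0 : 0 ≤ s) (hs1 : s < 1) :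
    Summable fun n : ℕ => (cc a n - cc a (n + 1)) * s ^ (2 * (n + 1)) := by
  have hw : ∀ n : ℕ, |(cc a n - cc a (n + 1)) * s ^ 2| ≤ 1 := by
    intro n
    rw [abs_mul]
    have h2 : |s ^ 2| ≤ 1 := by rw [abs_of_nonneg (sq_nonneg s)]; nlinarith
    calc |cc a n - cc a (n+1)| * |s ^ 2| ≤ 1 * 1 :=
          mul_le_mul (ccd_abs h0 h1 n) h2 (abs_nonneg _) zero_le_one
      _ = 1 := by ring
  refine (summable_w hw hs0 hs1).congr fun n => ?_
  rw [show 2 * (n + 1) = 2 * n + 2 by ring, pow_add]; ring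

private lemma U_mono {a : ℝ} (h0 : 0 < a) (h1 : a ≤ 1/2) {s t : ℝ}
    (hs0 : 0 ≤ s) (hst : s < t) (ht1 : t < 1) :
    (∑' n : ℕ, (cc a n - cc a (n + 1)) * s ^ (2 * (n + 1)))
      < ∑' n : ℕ, (cc a n - cc a (n + 1)) * t ^ (2 * (n + 1)) := by
  have ht0 : 0 ≤ t := le_of_lt (lt_of_le_of_lt hs0 hst)
  refine Summable.tsum_lt_tsum_of_nonneg (i := 0) (fun n => ?_) (fun n => ?_) ?_ (sumU h0 h1 ht0 ht1)
  · have h2 := cc_succ_le h0 h1 n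
    exact mul_nonneg (by linarith) (by positivity)
  · have h2 := cc_succ_le h0 h1 n
    exact mul_le_mul_of_nonneg_left (pow_le_pow_left₀ hs0 hst.le _) (by linarith)
  · have hcoef : 0 < cc a 0 - cc a 1 := by
      rw [cc_zero, cc_one]; nlinarith [a1a_le h0 h1]
    have : s ^ (2 * (0 + 1)) < t ^ (2 * (0 + 1)) := by
      apply pow_lt_pow_left₀ hst hs0; norm_num
    exact mul_lt_mul_of_pos_left this hcoef

private lemma S_mono {a : ℝ} (h0 : 0 < a) (h1 : a ≤ 1/2) {s t : ℝ}
    (hs0 : 0 ≤ s) (hst : s < t) (ht1 : t < 1) :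
    (∑' n : ℕ, qq a n * s ^ (2 * n)) < ∑' n : ℕ, qq a n * t ^ (2 * n) := by
  have ht0 : 0 ≤ t := le_of_lt (lt_of_le_of_lt hs0 hst)
  refine Summable.tsum_lt_tsum_of_nonneg (i := 1) (fun n => ?_) (fun n => ?_) ?_ (sumQ h0 h1 ht0 ht1)
  · have := qq_pos h0 h1 n
    positivity
  · exact mul_le_mul_of_nonneg_left (pow_le_pow_left₀ hs0 hst.le _) (qq_pos h0 h1 n).le
  · have : s ^ (2 * 1) < t ^ (2 * 1) := by
      apply pow_lt_pow_left₀ hst hs0; norm_num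
    exact mul_lt_mul_of_pos_left this (qq_pos h0 h1 1)

private lemma S_pos {a : ℝ} (h0 : 0 < a) (h1 : a ≤ 1/2) {r : ℝ} (hr0 : 0 ≤ r) (hr1 : r < 1) :
    0 < ∑' n : ℕ, qq a n * r ^ (2 * n) := by
  have h := Summable.le_tsum (sumQ h0 h1 hr0 hr1) 0 (fun j _ => by
    have := qq_pos h0 h1 j
    positivity)
  have : qq a 0 * r ^ (2 * 0) = qq a 0 := by norm_num
  have hq := qq_pos h0 h1 0
  nlinarith [h]

private lemma Ka_pos {a : ℝ} (h0 : 0 < a) (h1 : a ≤ 1/2) {s : ℝ} (hs0 : 0 ≤ s) (hs1 : s < 1) :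
    0 < Ka a s := by
  rw [Ka_eq]
  have h := Summable.le_tsum (sumA h0 h1 hs0 hs1) 0 (fun j _ => by
    have := cc_pos h0 (by linarith) j
    positivity)
  have h00 : cc a 0 * s ^ (2 * 0) = 1 := by simp [cc_zero]
  have hπ : 0 < π / 2 := by positivity
  nlinarith [h]

theorem f9_strictMono (a : ℝ) (ha : a ∈ Set.Ioc (0:ℝ) (1/2)) :
    StrictMonoOn (fun r : ℝ =>
        r^2 * Ka a (Real.sqrt (1 - r^2)) * Ka a r -
          3*(1 - a) * Ka a (Real.sqrt (1 - r^2)) * (Ea a r - (1 - r^2) * Ka a r))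
      (Set.Ioo 0 1) := by
  obtain ⟨h0, h1⟩ := ha
  intro x hx y hy hxy
  obtain ⟨hx0, hx1⟩ := hx
  obtain ⟨hy0, hy1⟩ := hy
  -- facts about the complementary arguments
  have key : ∀ r : ℝ, 0 < r → r < 1 →
      (r^2 * Ka a (Real.sqrt (1 - r^2)) * Ka a r -
        3*(1 - a) * Ka a (Real.sqrt (1 - r^2)) * (Ea a r - (1 - r^2) * Ka a r))
      = ((π / 2) * (1 - ∑' n : ℕ, (cc a n - cc a (n + 1)) * (Real.sqrt (1 - r^2)) ^ (2 * (n + 1))))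
        * ((π / 2) * ∑' n : ℕ, qq a n * r ^ (2 * n)) := by
    intro r hr0 hr1
    set s := Real.sqrt (1 - r^2) with hs
    have hrr : 1 - r^2 ≥ 0 := by nlinarith
    have hs2 : s ^ 2 = 1 - r ^ 2 := Real.sq_sqrt hrr
    have hs0 : 0 ≤ s := Real.sqrt_nonneg _
    have hs1 : s < 1 := by
      have : s < Real.sqrt 1 := Real.sqrt_lt_sqrt hrr (by nlinarith)
      simpa using this
    have e1 := identity1 h0 h1 hr0.le hr1
    have e2 := identity2 h0 h1 hs0 hs1
    have factored : r^2 * Ka a s * Ka a r -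
        3*(1 - a) * Ka a s * (Ea a r - (1 - r^2) * Ka a r)
        = Ka a s * (r ^ 2 * Ka a r - 3 * (1 - a) * (Ea a r - (1 - r^2) * Ka a r)) := by
      ring
    rw [factored, e1]
    have : Ka a s * (r ^ 2 * ((π / 2) * ∑' n : ℕ, qq a n * r ^ (2 * n)))
        = ((1 - s^2) * Ka a s) * ((π / 2) * ∑' n : ℕ, qq a n * r ^ (2 * n)) := by
      rw [hs2]; ring
    rw [this, e2]
  -- positivity of the two factors at x
  have hsx2 : (Real.sqrt (1 - x^2)) ^ 2 = 1 - x ^ 2 := Real.sq_sqrt (by nlinarith)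
  have hsx0 : 0 ≤ Real.sqrt (1 - x^2) := Real.sqrt_nonneg _
  have hsx1 : Real.sqrt (1 - x^2) < 1 := by
    have : Real.sqrt (1 - x^2) < Real.sqrt 1 := Real.sqrt_lt_sqrt (by nlinarith) (by nlinarith)
    simpa using this
  have hsy2 : (Real.sqrt (1 - y^2)) ^ 2 = 1 - y ^ 2 := Real.sq_sqrt (by nlinarith)
  have hsy0 : 0 ≤ Real.sqrt (1 - y^2) := Real.sqrt_nonneg _
  have hsy1 : Real.sqrt (1 - y^2) < 1 := by
    have : Real.sqrt (1 - y^2) < Real.sqrt 1 := Real.sqrt_lt_sqrt (by nlinarith) (by nlinarith)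
    simpa using this
  have hsyx : Real.sqrt (1 - y^2) < Real.sqrt (1 - x^2) :=
    Real.sqrt_lt_sqrt (by nlinarith) (by nlinarith)
  -- first factor positivity at x : (π/2)(1 - U sx) = (1 - sx²) Ka a sx > 0
  have hfac1x : 0 < (π / 2) * (1 - ∑' n : ℕ, (cc a n - cc a (n + 1)) * (Real.sqrt (1 - x^2)) ^ (2 * (n + 1))) := by
    rw [← identity2 h0 h1 hsx0 hsx1]
    have hKa := Ka_pos h0 h1 hsx0 hsx1
    have : 0 < 1 - (Real.sqrt (1 - x^2)) ^ 2 := by rw [hsx2]; nlinarith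
    exact mul_pos this hKa
  have hfac2x : 0 < (π / 2) * ∑' n : ℕ, qq a n * x ^ (2 * n) := by
    have := S_pos h0 h1 hx0.le hx1
    positivity
  -- strict inequalities between factors
  have hU := U_mono h0 h1 hsy0 hsyx hsx1
  have hfac1 : (π / 2) * (1 - ∑' n : ℕ, (cc a n - cc a (n + 1)) * (Real.sqrt (1 - x^2)) ^ (2 * (n + 1)))
      < (π / 2) * (1 - ∑' n : ℕ, (cc a n - cc a (n + 1)) * (Real.sqrt (1 - y^2)) ^ (2 * (n + 1))) := by
    have hπ : 0 < π / 2 := by positivity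
    have := hU
    nlinarith
  have hfac2 : (π / 2) * ∑' n : ℕ, qq a n * x ^ (2 * n)
      < (π / 2) * ∑' n : ℕ, qq a n * y ^ (2 * n) := by
    have hπ : 0 < π / 2 := by positivity
    have := S_mono h0 h1 hx0.le hxy hy1
    nlinarith
  simp only
  rw [key x hx0 hx1, key y hy0 hy1]
  exact mul_lt_mul'' hfac1 hfac2 hfac1x.le hfac2x.le
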